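/- arXiv:math/0506269 — 2 statements merged into one kernel-verified Lean document; each statement's English description precedes it below -/
import Mathlib

section
/- Subsampling error bound: let a = (a_0,...,a_M) be a sequence in ℝ² and let (a_{k_1},...,a_{k_p}) be a subsequence with k_1 = 0, k_p = M, such that |a_{k_i} − a_l| ≤ ε whenever k_i < l < k_{i+1}. Then for any sequence b, |d(a,b) − d((a_{k_1},...,a_{k_p}), b)| ≤ ε, where d is the discrete Fréchet distance. -/
noncomputable section

def IsFCoupling (L M N : ℕ) (μ ν : ℕ → ℕ) : Prop :=
  Monotone μ ∧ Monotone ν ∧ μ 0 = 0 ∧ ν 0 = 0 ∧ μ L = M ∧ ν L = N ∧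
    ∀ k < L, μ (k + 1) ≤ μ k + 1 ∧ ν (k + 1) ≤ ν k + 1

/-- The discrete Fréchet distance between `(a_0,…,a_M)` and `(b_0,…,b_N)`. -/
def dFrechet (M N : ℕ) (a b : ℕ → EuclideanSpace ℝ (Fin 2)) : ℝ :=
  sInf {r : ℝ | ∃ L μ ν, IsFCoupling L M N μ ν ∧
    r = (Finset.range (L + 1)).sup'
      (Finset.nonempty_range_iff.mpr (Nat.succ_ne_zero _))
      (fun k => dist (a (μ k)) (b (ν k)))}

namespace SubsampleAux

lemma chain_lt {p : ℕ} {k : ℕ → ℕ} (hkmono : ∀ i < p, k i < k (i + 1)) :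
    ∀ j ≤ p, ∀ i < j, k i < k j := by
  intro j hj
  induction j with
  | zero => intro i hi; omega
  | succ n ih =>
    intro i hi
    have h1 := hkmono n (by omega)
    rcases Nat.lt_succ_iff_lt_or_eq.mp hi with h | h
    · exact (ih (by omega) i h).trans h1
    · subst h; exact h1

lemma chain_le {p : ℕ} {k : ℕ → ℕ} (hkmono : ∀ i < p, k i < k (i + 1)) :
    ∀ j ≤ p, ∀ i ≤ j, k i ≤ k j := by
  intro j hj i hi
  rcases eq_or_lt_of_le hi with h | h
  · exact h ▸ le_rfl
  · exact (chain_lt hkmono j hj i h).le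

def FSet (M N : ℕ) (a b : ℕ → EuclideanSpace ℝ (Fin 2)) : Set ℝ :=
  {r : ℝ | ∃ L μ ν, IsFCoupling L M N μ ν ∧
    r = (Finset.range (L + 1)).sup'
      (Finset.nonempty_range_iff.mpr (Nat.succ_ne_zero _))
      (fun k => dist (a (μ k)) (b (ν k)))}

lemma dFrechet_eq (M N : ℕ) (a b : ℕ → EuclideanSpace ℝ (Fin 2)) :
    dFrechet M N a b = sInf (FSet M N a b) := rfl

lemma trivial_coupling (M N : ℕ) :
    IsFCoupling (M + N) M N (fun t => min t M) (fun t => t - M) := by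
  refine ⟨fun x y h => ?_, fun x y h => ?_, ?_, ?_, ?_, ?_, fun t ht => ⟨?_, ?_⟩⟩
  · show min x M ≤ min y M; omega
  · show x - M ≤ y - M; omega
  · show min 0 M = 0; omega
  · show 0 - M = 0; omega
  · show min (M + N) M = M; omega
  · show M + N - M = N; omega
  · show min (t + 1) M ≤ min t M + 1; omega
  · show t + 1 - M ≤ t - M + 1; omega

lemma set_nonempty (M N : ℕ) (a b : ℕ → EuclideanSpace ℝ (Fin 2)) :
    (FSet M N a b).Nonempty :=
  ⟨_, _, _, _, trivial_coupling M N, rfl⟩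

lemma set_bddBelow (M N : ℕ) (a b : ℕ → EuclideanSpace ℝ (Fin 2)) :
    BddBelow (FSet M N a b) := by
  refine ⟨0, ?_⟩
  rintro r ⟨L, μ, ν, hc, rfl⟩
  exact le_trans dist_nonneg
    (Finset.le_sup' (fun t => dist (a (μ t)) (b (ν t))) (Finset.mem_range.mpr (Nat.succ_pos L)))

lemma le_aux {M N M' : ℕ} {ε : ℝ} (a a' b : ℕ → EuclideanSpace ℝ (Fin 2))
    (h : ∀ L μ ν, IsFCoupling L M N μ ν →
      ∃ L' μ' ν', IsFCoupling L' M' N μ' ν' ∧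
        ∀ s ≤ L', ∃ t ≤ L,
          dist (a' (μ' s)) (b (ν' s)) ≤ dist (a (μ t)) (b (ν t)) + ε) :
    dFrechet M' N a' b ≤ dFrechet M N a b + ε := by
  rw [dFrechet_eq, dFrechet_eq]
  have key : ∀ r ∈ FSet M N a b, sInf (FSet M' N a' b) ≤ r + ε := by
    rintro r ⟨L, μ, ν, hc, rfl⟩
    obtain ⟨L', μ', ν', hc', hb⟩ := h L μ ν hc
    have hmem : ((Finset.range (L' + 1)).sup'
        (Finset.nonempty_range_iff.mpr (Nat.succ_ne_zero _))
        (fun s => dist (a' (μ' s)) (b (ν' s)))) ∈ FSet M' N a' b :=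
      ⟨L', μ', ν', hc', rfl⟩
    refine le_trans (csInf_le (set_bddBelow M' N a' b) hmem) ?_
    apply Finset.sup'_le
    intro s hs
    obtain ⟨t, ht, hd⟩ := hb s (Nat.lt_succ_iff.mp (Finset.mem_range.mp hs))
    have h2 := Finset.le_sup' (fun t => dist (a (μ t)) (b (ν t)))
      (Finset.mem_range.mpr (Nat.lt_succ_of_le ht))
    linarith
  have h1 : sInf (FSet M' N a' b) - ε ≤ sInf (FSet M N a b) :=
    le_csInf (set_nonempty M N a b) (fun r hr => by linarith [key r hr])
  linarith

lemma dirA {M N p : ℕ} {ε : ℝ} (hε : 0 ≤ ε)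
    (a b : ℕ → EuclideanSpace ℝ (Fin 2)) (k : ℕ → ℕ)
    (hk0 : k 0 = 0) (hkp : k p = M)
    (hkmono : ∀ i < p, k i < k (i + 1))
    (hclose : ∀ i < p, ∀ l, k i < l → l < k (i + 1) → dist (a (k i)) (a l) ≤ ε) :
    dFrechet p N (fun i => a (k i)) b ≤ dFrechet M N a b + ε := by
  apply le_aux
  intro L μ ν hc
  obtain ⟨hμm, hνm, hμ0, hν0, hμL, hνL, hstep⟩ := hc
  set g : ℕ → ℕ := fun m => Nat.findGreatest (fun i => k i ≤ m) p with hgdef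
  have hgP : ∀ m, k (g m) ≤ m := fun m =>
    Nat.findGreatest_spec (P := fun i => k i ≤ m) (Nat.zero_le p)
      (by show k 0 ≤ m; rw [hk0]; exact Nat.zero_le m)
  have hgle : ∀ m, g m ≤ p := fun m => Nat.findGreatest_le p
  have hmax : ∀ m i, i ≤ p → k i ≤ m → i ≤ g m := fun m i h1 h2 => Nat.le_findGreatest h1 h2
  have hgmono : Monotone g := fun x y hxy => hmax y (g x) (hgle x) (le_trans (hgP x) hxy)
  have hg0 : g 0 = 0 := by
    by_contra h
    have h1 := chain_lt hkmono (g 0) (hgle 0) 0 (Nat.pos_of_ne_zero h)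
    have h2 := hgP 0
    omega
  have hgM : g M = p := le_antisymm (hgle M) (hmax M p le_rfl (le_of_eq hkp))
  have hgstep : ∀ m, g (m + 1) ≤ g m + 1 := by
    intro m
    by_contra h
    push_neg at h
    have h1 : k (g m + 1) < k (g (m + 1)) := chain_lt hkmono _ (hgle _) _ (by omega)
    have h2 := hgP (m + 1)
    have h3 := hmax m (g m + 1) (by have := hgle (m + 1); omega) (by omega)
    omega
  have hclose' : ∀ m ≤ M, dist (a (k (g m))) (a m) ≤ ε := by
    intro m hm
    rcases eq_or_lt_of_le (hgP m) with h | h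
    · rw [h, dist_self]; exact hε
    · have hgp : g m < p := by
        rcases eq_or_lt_of_le (hgle m) with h2 | h2
        · rw [h2, hkp] at h; omega
        · exact h2
      have h4 : m < k (g m + 1) := by
        by_contra h5
        push_neg at h5
        have := hmax m (g m + 1) (by omega) h5
        omega
      exact hclose (g m) hgp m h h4
  refine ⟨L, fun s => g (μ s), ν,
    ⟨hgmono.comp hμm, hνm, ?_, hν0, ?_, hνL,
      fun s hs => ⟨le_trans (hgmono (hstep s hs).1) (hgstep (μ s)), (hstep s hs).2⟩⟩, ?_⟩
  · show g (μ 0) = 0; rw [hμ0, hg0]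
  · show g (μ L) = p; rw [hμL, hgM]
  · intro s hs
    refine ⟨s, hs, ?_⟩
    have hμs : μ s ≤ M := le_trans (hμm hs) (le_of_eq hμL)
    have h1 := hclose' (μ s) hμs
    have h2 := dist_triangle (a (k (g (μ s)))) (a (μ s)) (b (ν s))
    show dist (a (k (g (μ s)))) (b (ν s)) ≤ dist (a (μ s)) (b (ν s)) + ε
    linarith

lemma dirB {M N p : ℕ} {ε : ℝ} (hε : 0 ≤ ε)
    (a b : ℕ → EuclideanSpace ℝ (Fin 2)) (k : ℕ → ℕ)
    (hk0 : k 0 = 0) (hkp : k p = M)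
    (hkmono : ∀ i < p, k i < k (i + 1))
    (hclose : ∀ i < p, ∀ l, k i < l → l < k (i + 1) → dist (a (k i)) (a l) ≤ ε) :
    dFrechet M N a b ≤ dFrechet p N (fun i => a (k i)) b + ε := by
  apply le_aux
  intro L μ ν hc
  obtain ⟨hμm, hνm, hμ0, hν0, hμL, hνL, hstep⟩ := hc
  have hμp : ∀ t, t ≤ L → μ t ≤ p := fun t ht => le_trans (hμm ht) (le_of_eq hμL)
  have hkge : ∀ i ≤ p, i ≤ k i := by
    intro i hi
    induction i with
    | zero => omega
    | succ n ih =>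
      have h1 := hkmono n (by omega)
      have h2 := ih (by omega)
      omega
  set S : ℕ → ℕ := fun t => t + (k (μ t) - μ t) with hSdef
  have hS0 : S 0 = 0 := by rw [hSdef]; simp [hμ0, hk0]
  have hSstep : ∀ t < L, S t < S (t + 1) := by
    intro t ht
    have h1 := (hstep t ht).1
    have h2 : μ t ≤ μ (t + 1) := hμm (Nat.le_succ t)
    have h3 := hkge (μ t) (hμp t (by omega))
    have h4 := hkge (μ (t + 1)) (hμp (t + 1) (by omega))
    have h5 : k (μ t) ≤ k (μ (t + 1)) := chain_le hkmono (μ (t + 1)) (hμp (t + 1) (by omega)) (μ t) h2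
    have hSa : S t = t + (k (μ t) - μ t) := by rw [hSdef]
    have hSb : S (t + 1) = t + 1 + (k (μ (t + 1)) - μ (t + 1)) := by rw [hSdef]
    rcases (by omega : μ (t + 1) = μ t ∨ μ (t + 1) = μ t + 1) with h6 | h6
    · have h9 : k (μ (t + 1)) = k (μ t) := by rw [h6]
      omega
    · have h7 : k (μ t) < k (μ (t + 1)) := chain_lt hkmono (μ (t + 1)) (hμp (t + 1) (by omega)) (μ t) (by omega)
      omega
  have hSmono := chain_le hSstep
  have hSlt := chain_lt hSstep
  set T : ℕ → ℕ := fun s => Nat.findGreatest (fun t => S t ≤ s) L with hTdef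
  have hT1 : ∀ s, S (T s) ≤ s := fun s =>
    Nat.findGreatest_spec (P := fun t => S t ≤ s) (Nat.zero_le L)
      (by show S 0 ≤ s; rw [hS0]; exact Nat.zero_le s)
  have hTle : ∀ s, T s ≤ L := fun s => Nat.findGreatest_le L
  have hTmax : ∀ s t, t ≤ L → S t ≤ s → t ≤ T s := fun s t h1 h2 => Nat.le_findGreatest h1 h2
  have hTmono : Monotone T := fun x y hxy => hTmax y (T x) (hTle x) (le_trans (hT1 x) hxy)
  have hT0 : T 0 = 0 := by
    by_contra h
    have h1 := hSlt (T 0) (hTle 0) 0 (Nat.pos_of_ne_zero h)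
    have h2 := hT1 0
    omega
  have hT2 : ∀ s, T s < L → s < S (T s + 1) := by
    intro s h
    by_contra h5
    push_neg at h5
    have := hTmax s (T s + 1) (by omega) h5
    omega
  have hTstep : ∀ s, T (s + 1) ≤ T s + 1 := by
    intro s
    by_contra h
    push_neg at h
    have h1 : S (T s + 1) < S (T (s + 1)) := hSlt (T (s + 1)) (hTle _) _ (by omega)
    have h2 := hT1 (s + 1)
    have h3 := hTmax s (T s + 1) (by have := hTle (s + 1); omega) (by omega)
    omega
  have hTL' : T (S L) = L := le_antisymm (hTle (S L)) (hTmax (S L) L le_rfl le_rfl)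
  have hstepμ : ∀ s, (k (μ (T s)) + (s - S (T s)) ≤ k (μ (T (s + 1))) + (s + 1 - S (T (s + 1)))) ∧
      (k (μ (T (s + 1))) + (s + 1 - S (T (s + 1))) ≤ k (μ (T s)) + (s - S (T s)) + 1) ∧
      ν (T s) ≤ ν (T (s + 1)) ∧ ν (T (s + 1)) ≤ ν (T s) + 1 := by
    intro s
    have hA : T s ≤ T (s + 1) := hTmono (Nat.le_succ s)
    have hB := hTstep s
    have hC := hT1 s
    have hD := hT1 (s + 1)
    rcases (by omega : T (s + 1) = T s ∨ T (s + 1) = T s + 1) with hE | hE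
    · rw [hE]
      exact ⟨by omega, by omega, le_rfl, by omega⟩
    · have htL : T s < L := by have := hTle (s + 1); omega
      have hSeq : S (T s + 1) = s + 1 := by
        have h0 := hT2 s htL
        rw [hE] at hD
        omega
      have h1 := (hstep (T s) htL).1
      have h2 := (hstep (T s) htL).2
      have h3 : μ (T s) ≤ μ (T s + 1) := hμm (Nat.le_succ (T s))
      have h4 : μ (T s) ≤ k (μ (T s)) := hkge (μ (T s)) (hμp _ htL.le)
      have h5 : μ (T s + 1) ≤ k (μ (T s + 1)) := hkge (μ (T s + 1)) (hμp (T s + 1) htL)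
      have h6 : k (μ (T s)) ≤ k (μ (T s + 1)) := chain_le hkmono (μ (T s + 1)) (hμp (T s + 1) htL) _ h3
      have hν1 : ν (T s) ≤ ν (T s + 1) := hνm (Nat.le_succ (T s))
      have hSTs : S (T s) = T s + (k (μ (T s)) - μ (T s)) := by rw [hSdef]
      have hSTs1 : S (T s + 1) = T s + 1 + (k (μ (T s + 1)) - μ (T s + 1)) := by rw [hSdef]
      rw [hE]
      rcases (by omega : μ (T s + 1) = μ (T s) ∨ μ (T s + 1) = μ (T s) + 1) with h7 | h7
      · have h9 : k (μ (T s + 1)) = k (μ (T s)) := by rw [h7]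
        exact ⟨by omega, by omega, hν1, h2⟩
      · have h8 : k (μ (T s)) < k (μ (T s + 1)) := chain_lt hkmono (μ (T s + 1)) (hμp (T s + 1) htL) _ (by omega)
        exact ⟨by omega, by omega, hν1, h2⟩
  refine ⟨S L, fun s => k (μ (T s)) + (s - S (T s)), fun s => ν (T s),
    ⟨monotone_nat_of_le_succ (fun s => (hstepμ s).1),
     monotone_nat_of_le_succ (fun s => (hstepμ s).2.2.1), ?_, ?_, ?_, ?_,
     fun s _ => ⟨(hstepμ s).2.1, (hstepμ s).2.2.2⟩⟩, ?_⟩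
  · show k (μ (T 0)) + (0 - S (T 0)) = 0
    rw [hT0, hμ0, hk0, hS0]
  · show ν (T 0) = 0
    rw [hT0, hν0]
  · show k (μ (T (S L))) + (S L - S (T (S L))) = M
    rw [hTL', hμL, hkp]
    omega
  · show ν (T (S L)) = N
    rw [hTL', hνL]
  · intro s hs
    refine ⟨T s, hTle s, ?_⟩
    show dist (a (k (μ (T s)) + (s - S (T s)))) (b (ν (T s))) ≤
      dist (a (k (μ (T s)))) (b (ν (T s))) + ε
    rcases Nat.eq_or_lt_of_le (hT1 s) with h | h
    · have h0 : s - S (T s) = 0 := by omega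
      rw [h0]
      have hd : (0:ℝ) ≤ dist (a (k (μ (T s)) + 0)) (b (ν (T s))) := dist_nonneg
      simp only [Nat.add_zero] at hd ⊢
      linarith
    · have htL : T s < L := by
        by_contra hcon
        push_neg at hcon
        have hTs : T s = L := le_antisymm (hTle s) hcon
        rw [hTs] at h
        omega
      have h2 := hT2 s htL
      have h1 := (hstep (T s) htL).1
      have h3 : μ (T s) ≤ μ (T s + 1) := hμm (Nat.le_succ (T s))
      have h4 : μ (T s) ≤ k (μ (T s)) := hkge (μ (T s)) (hμp _ htL.le)
      have h5 : μ (T s + 1) ≤ k (μ (T s + 1)) := hkge (μ (T s + 1)) (hμp (T s + 1) htL)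
      have hSTs : S (T s) = T s + (k (μ (T s)) - μ (T s)) := by rw [hSdef]
      have hSTs1 : S (T s + 1) = T s + 1 + (k (μ (T s + 1)) - μ (T s + 1)) := by rw [hSdef]
      have h7 : μ (T s + 1) = μ (T s) + 1 := by
        rcases (by omega : μ (T s + 1) = μ (T s) ∨ μ (T s + 1) = μ (T s) + 1) with h7 | h7
        · exfalso
          have h9 : k (μ (T s + 1)) = k (μ (T s)) := by rw [h7]
          omega
        · exact h7
      have hμlt : μ (T s) < p := by
        have hzz : μ (T s + 1) ≤ p := hμp (T s + 1) htL
        omega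
      have hlt1 : k (μ (T s)) < k (μ (T s)) + (s - S (T s)) := by omega
      have hlt2 : k (μ (T s)) + (s - S (T s)) < k (μ (T s) + 1) := by
        rw [← h7]
        omega
      have hd := hclose (μ (T s)) hμlt (k (μ (T s)) + (s - S (T s))) hlt1 hlt2
      have htri := dist_triangle (a (k (μ (T s)) + (s - S (T s)))) (a (k (μ (T s)))) (b (ν (T s)))
      rw [dist_comm (a (k (μ (T s)) + (s - S (T s)))) (a (k (μ (T s))))] at htri
      linarith

end SubsampleAux

/-- subsampling error bound.  If `(a_{k_0},…,a_{k_p})` is a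
subsequence of `(a_0,…,a_M)` with `k_0 = 0`, `k_p = M`, such that every skipped
point is within `ε` of the retained point on its left, then the discrete Fréchet
distance to any sequence `b` changes by at most `ε`. -/
theorem dFrechet_subsample_error (M N p : ℕ) (ε : ℝ) (hε : 0 ≤ ε)
    (a b : ℕ → EuclideanSpace ℝ (Fin 2)) (k : ℕ → ℕ)
    (hk0 : k 0 = 0) (hkp : k p = M)
    (hkmono : ∀ i < p, k i < k (i + 1))
    (hclose : ∀ i < p, ∀ l, k i < l → l < k (i + 1) → dist (a (k i)) (a l) ≤ ε) :
    |dFrechet M N a b - dFrechet p N (fun i => a (k i)) b| ≤ ε := by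
  have hA := SubsampleAux.dirA (N := N) hε a b k hk0 hkp hkmono hclose
  have hB := SubsampleAux.dirB (N := N) hε a b k hk0 hkp hkmono hclose
  rw [abs_sub_le_iff]
  constructor <;> linarith
end
end

section
/- The discrete Fréchet distance between two finite sequences is at least the Fréchet distance between the corresponding polygonal paths, and their difference is at most the maximal step length of either sequence: |d_discrete(a,b) − d_cont(â,b̂)| ≤ max(step(a), step(b)), where â, b̂ are the piecewise-linear interpolations and step(a) = max_i |a_{i+1} − a_i|. -/
/-!
Lower bound: a coupling `(μ, ν)` of length `L` yields reparametrizations by interpolating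
`k / L ↦ μ k / M` and `k / L ↦ ν k / N` linearly. Each index advances by at most one per step, so on
`[k / L, (k + 1) / L]` both polygonal paths run along (possibly degenerate) edges with the same
affine parameter, and the distance between such points is at most the larger of the two endpoint
distances.

Upper bound: given reparametrizations `φ, ψ`, pick times `T k` at which `φ * M + ψ * N = k / 2`
(intermediate value theorem). Both coordinates then advance by at most `1 / 2` per step, so rounding
them to the nearest integer gives a discrete coupling, and rounding moves each point by at most half
a step length.
-/

noncomputable section

open unitInterval

def IsRepar (φ : unitInterval → unitInterval) : Prop :=
  Continuous φ ∧ Monotone φ ∧ Function.Surjective φ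

/-- The continuous Fréchet-type path distance. -/
def dPath (γ₁ γ₂ : unitInterval → EuclideanSpace ℝ (Fin 2)) : ℝ :=
  ⨅ φ : {p : (unitInterval → unitInterval) × (unitInterval → unitInterval) //
      IsRepar p.1 ∧ IsRepar p.2},
    ⨆ t : unitInterval, dist (γ₁ (φ.1.1 t)) (γ₂ (φ.1.2 t))

/-- The polygonal path through `a_0, …, a_M`, uniformly parameterized on `[0,1]`. -/
def polyPath (M : ℕ) (a : ℕ → EuclideanSpace ℝ (Fin 2)) :
    unitInterval → EuclideanSpace ℝ (Fin 2) := fun t =>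
  (1 - ((t : ℝ) * M - ⌊(t : ℝ) * M⌋₊)) • a ⌊(t : ℝ) * M⌋₊ +
    ((t : ℝ) * M - ⌊(t : ℝ) * M⌋₊) • a (⌊(t : ℝ) * M⌋₊ + 1)


open AffineMap Set

section PiecewiseLinear

/-- The piecewise-linear function on `[0, 1]` taking the value `c k` at `k / L` for `k ≤ L`. -/
def piecewiseLinear (L : ℕ) (c : ℕ → ℝ) (t : ℝ) : ℝ :=
  c 0 + ∑ j ∈ Finset.range L, (c (j + 1) - c j) * (projIcc (0 : ℝ) 1 zero_le_one (t * L - j) : ℝ)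

variable (L : ℕ) (c : ℕ → ℝ)

lemma continuous_piecewiseLinear : Continuous (piecewiseLinear L c) := by
  unfold piecewiseLinear
  fun_prop

lemma monotone_piecewiseLinear (hc : Monotone c) : Monotone (piecewiseLinear L c) := by
  intro x y hxy
  refine add_le_add_right (Finset.sum_le_sum fun j _ => ?_) _
  refine mul_le_mul_of_nonneg_left ?_ (sub_nonneg.2 (hc j.le_succ))
  exact monotone_projIcc _ (sub_le_sub_right (mul_le_mul_of_nonneg_right hxy L.cast_nonneg) _)

lemma piecewiseLinear_zero : piecewiseLinear L c 0 = c 0 := by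
  simp [piecewiseLinear, projIcc_of_le_left]

lemma piecewiseLinear_one : piecewiseLinear L c 1 = c L := by
  have h : ∀ j ∈ Finset.range L,
      (c (j + 1) - c j) * (projIcc (0 : ℝ) 1 zero_le_one (1 * L - j) : ℝ) = c (j + 1) - c j := by
    intro j hj
    have : (j : ℝ) + 1 ≤ L := by exact_mod_cast Finset.mem_range.1 hj
    rw [projIcc_of_right_le _ (by linarith), Subtype.coe_mk, mul_one]
  rw [piecewiseLinear, Finset.sum_congr rfl h, Finset.sum_range_sub, add_sub_cancel]

lemma piecewiseLinear_eq_lineMap {t : ℝ} {k : ℕ} (hk : k < L) (hk₀ : k ≤ t * L)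
    (hk₁ : t * L ≤ k + 1) : piecewiseLinear L c t = lineMap (c k) (c (k + 1)) (t * L - k) := by
  have below : ∀ j ∈ Finset.range k,
      (c (j + 1) - c j) * (projIcc (0 : ℝ) 1 zero_le_one (t * L - j) : ℝ) = c (j + 1) - c j := by
    intro j hj
    have : (j : ℝ) + 1 ≤ k := by exact_mod_cast Finset.mem_range.1 hj
    rw [projIcc_of_right_le _ (by linarith), Subtype.coe_mk, mul_one]
  have above : ∀ j ∈ Finset.Ico (k + 1) L,
      (c (j + 1) - c j) * (projIcc (0 : ℝ) 1 zero_le_one (t * L - j) : ℝ) = 0 := by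
    intro j hj
    have : (k : ℝ) + 1 ≤ j := by exact_mod_cast (Finset.mem_Ico.1 hj).1
    rw [projIcc_of_le_left _ (by linarith), Subtype.coe_mk, mul_zero]
  rw [piecewiseLinear, ← Finset.sum_range_add_sum_Ico _ hk, Finset.sum_range_succ,
    Finset.sum_congr rfl below, Finset.sum_congr rfl above, Finset.sum_range_sub,
    projIcc_of_mem _ ⟨by linarith, by linarith⟩, lineMap_apply_module]
  simp only [smul_eq_mul, Finset.sum_const_zero]
  ring

end PiecewiseLinear

lemma exists_nat_lt_mem_Icc {L : ℕ} (hL : 0 < L) {u : ℝ} (hu : u ∈ Icc 0 (L : ℝ)) :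
    ∃ k < L, u ∈ Icc (k : ℝ) (k + 1) := by
  rcases hu.2.lt_or_eq with hlt | rfl
  · exact ⟨⌊u⌋₊, (Nat.floor_lt hu.1).2 hlt, Nat.floor_le hu.1, (Nat.lt_floor_add_one u).le⟩
  · refine ⟨L - 1, Nat.sub_lt hL one_pos, ?_⟩
    rw [Nat.cast_pred hL, sub_add_cancel]
    exact ⟨by linarith, le_rfl⟩

lemma dist_lineMap_le_max {E : Type*} [SeminormedAddCommGroup E] [NormedSpace ℝ E]
    (x x' y y' : E) {s : ℝ} (hs : s ∈ Icc (0 : ℝ) 1) :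
    dist (lineMap x x' s) (lineMap y y' s) ≤ max (dist x y) (dist x' y') := by
  rw [lineMap_apply_module, lineMap_apply_module]
  calc dist ((1 - s) • x + s • x') ((1 - s) • y + s • y')
      ≤ dist ((1 - s) • x) ((1 - s) • y) + dist (s • x') (s • y') := dist_add_add_le _ _ _ _
    _ = (1 - s) * dist x y + s * dist x' y' := by
        rw [dist_smul₀, dist_smul₀, Real.norm_of_nonneg (sub_nonneg.2 hs.2),
          Real.norm_of_nonneg hs.1]
    _ ≤ (1 - s) * max (dist x y) (dist x' y') + s * max (dist x y) (dist x' y') := by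
        gcongr
        · linarith [hs.2]
        · exact le_max_left _ _
        · exact hs.1
        · exact le_max_right _ _
    _ = max (dist x y) (dist x' y') := by ring

lemma Monotone.le_and_le_of_add_le_add {α β : Type*} [LinearOrder α] [AddCommMonoid β]
    [LinearOrder β] [IsOrderedCancelAddMonoid β] {f g : α → β} (hf : Monotone f)
    (hg : Monotone g) {s t : α} (h : f s + g s ≤ f t + g t) : f s ≤ f t ∧ g s ≤ g t := by
  rcases le_total s t with hst | hts
  · exact ⟨hf hst, hg hst⟩
  · have hf' := hf hts
    have hg' := hg hts
    constructor
    · by_contra! hlt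
      exact (add_lt_add_of_lt_of_le hlt hg').not_ge h
    · by_contra! hlt
      exact (add_lt_add_of_le_of_lt hf' hlt).not_ge h

section Reparametrization

variable {φ : I → I}

lemma IsRepar.map_zero (hφ : IsRepar φ) : φ 0 = 0 := by
  obtain ⟨t, ht⟩ := hφ.2.2 0
  exact le_antisymm ((hφ.2.1 nonneg').trans_eq ht) nonneg'

lemma IsRepar.map_one (hφ : IsRepar φ) : φ 1 = 1 := by
  obtain ⟨t, ht⟩ := hφ.2.2 1
  exact le_antisymm le_one' (ht.symm.trans_le (hφ.2.1 le_one'))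

lemma isRepar_of_map_zero_of_map_one (hc : Continuous φ) (hm : Monotone φ) (h0 : φ 0 = 0)
    (h1 : φ 1 = 1) : IsRepar φ :=
  ⟨hc, hm, fun y => intermediate_value_univ 0 1 hc (by rw [h0, h1]; exact ⟨nonneg', le_one'⟩)⟩

lemma exists_isRepar_piecewiseLinear {L : ℕ} {c : ℕ → ℝ} (hc : Monotone c) (h0 : c 0 = 0)
    (hL : c L = 1) : ∃ φ : I → I, IsRepar φ ∧ ∀ t : I, (φ t : ℝ) = piecewiseLinear L c t := by
  have hmono := monotone_piecewiseLinear L c hc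
  have hmem (t : I) : piecewiseLinear L c t ∈ I := by
    constructor
    · simpa [piecewiseLinear_zero, h0] using hmono t.2.1
    · simpa [piecewiseLinear_one, hL] using hmono t.2.2
  refine ⟨fun t => ⟨_, hmem t⟩, isRepar_of_map_zero_of_map_one ?_ ?_ ?_ ?_, fun t => rfl⟩
  · exact ((continuous_piecewiseLinear L c).comp continuous_subtype_val).subtype_mk _
  · exact fun s t hst => hmono hst
  · exact Subtype.ext (by simp [piecewiseLinear_zero, h0])
  · exact Subtype.ext (by simp [piecewiseLinear_one, hL])

end Reparametrization

section PolyPath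

variable {M : ℕ} (a : ℕ → EuclideanSpace ℝ (Fin 2))

lemma polyPath_eq_lineMap {x : I} {p : ℕ} {s : ℝ} (hs : s ∈ Icc (0 : ℝ) 1)
    (hx : (x : ℝ) * M = p + s) : polyPath M a x = lineMap (a p) (a (p + 1)) s := by
  rcases hs.2.lt_or_eq with hlt | rfl
  · have hfloor : ⌊(x : ℝ) * M⌋₊ = p := by
      rw [hx, add_comm, Nat.floor_add_natCast hs.1, Nat.floor_eq_zero.2 hlt, zero_add]
    simp only [polyPath]
    rw [hfloor, hx, add_sub_cancel_left, lineMap_apply_module]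
  · have hfloor : ⌊(x : ℝ) * M⌋₊ = p + 1 := by
      rw [hx, ← Nat.cast_add_one, Nat.floor_natCast]
    simp only [polyPath]
    rw [hfloor, hx, Nat.cast_add_one, sub_self, sub_zero, one_smul, zero_smul, add_zero,
      lineMap_apply_one]

lemma polyPath_eq_lineMap_of_le_succ {x : I} {p q : ℕ} (hq : q = p ∨ q = p + 1) {s : ℝ}
    (hs : s ∈ Icc (0 : ℝ) 1) (hx : (x : ℝ) * M = lineMap (p : ℝ) q s) :
    polyPath M a x = lineMap (a p) (a q) s := by
  rcases hq with rfl | rfl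
  · rw [lineMap_same_apply, ← add_zero (q : ℝ)] at hx
    rw [polyPath_eq_lineMap a ⟨le_rfl, zero_le_one⟩ hx, lineMap_apply_zero, lineMap_same_apply]
  · refine polyPath_eq_lineMap a hs ?_
    rw [hx, lineMap_apply_module]
    push_cast
    ring

lemma isBounded_range_polyPath : Bornology.IsBounded (range (polyPath M a)) := by
  refine (((finite_Iic (M + 1)).image a).isCompact_convexHull ℝ).isBounded.subset ?_
  rintro _ ⟨x, rfl⟩
  have hxM : (x : ℝ) * M ≤ M := mul_le_of_le_one_left M.cast_nonneg x.2.2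
  have hx0 : 0 ≤ (x : ℝ) * M := mul_nonneg x.2.1 M.cast_nonneg
  have hm : ⌊(x : ℝ) * M⌋₊ ≤ M := Nat.floor_le_of_le hxM
  have hvertex {i : ℕ} (hi : i ≤ M + 1) : a i ∈ convexHull ℝ (a '' Iic (M + 1)) :=
    subset_convexHull ℝ _ ⟨i, hi, rfl⟩
  exact convex_convexHull ℝ _ (hvertex (by omega)) (hvertex (by omega))
    (by linarith [Nat.lt_floor_add_one ((x : ℝ) * M)]) (sub_nonneg.2 (Nat.floor_le hx0))
    (by ring)

lemma dist_polyPath_floor_add_half_le (hM : 0 < M) {S : ℝ}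
    (hS : ∀ i < M, dist (a (i + 1)) (a i) ≤ S) (x : I) :
    dist (a ⌊(x : ℝ) * M + 2⁻¹⌋₊) (polyPath M a x) ≤ S / 2 := by
  obtain ⟨k, hkM, hk⟩ := exists_nat_lt_mem_Icc hM
    ⟨mul_nonneg x.2.1 M.cast_nonneg, mul_le_of_le_one_left M.cast_nonneg x.2.2⟩
  have hs : (x : ℝ) * M - k ∈ Icc (0 : ℝ) 1 := ⟨by linarith [hk.1], by linarith [hk.2]⟩
  rw [polyPath_eq_lineMap a (p := k) hs (by ring)]
  have hstep : dist (a k) (a (k + 1)) ≤ S := (dist_comm _ _).trans_le (hS k hkM)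
  rcases lt_or_ge ((x : ℝ) * M - k) 2⁻¹ with hlt | hge
  · have hround : ⌊(x : ℝ) * M + 2⁻¹⌋₊ = k :=
      (Nat.floor_eq_iff (by linarith [hk.1])).2 ⟨by linarith [hk.1], by linarith⟩
    rw [hround, dist_left_lineMap, Real.norm_of_nonneg hs.1, div_eq_inv_mul]
    exact mul_le_mul hlt.le hstep dist_nonneg (by norm_num)
  · have hround : ⌊(x : ℝ) * M + 2⁻¹⌋₊ = k + 1 :=
      (Nat.floor_eq_iff (by linarith [hk.1])).2 ⟨by push_cast; linarith, by push_cast; linarith [hk.2]⟩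
    rw [hround, dist_right_lineMap, Real.norm_of_nonneg (sub_nonneg.2 hs.2), div_eq_inv_mul]
    exact mul_le_mul (by linarith) hstep dist_nonneg (by norm_num)

end PolyPath

section FrechetDistances

variable {M N : ℕ} {a b : ℕ → EuclideanSpace ℝ (Fin 2)} {r : ℝ}

lemma exists_isFCoupling (M N : ℕ) : ∃ L μ ν, IsFCoupling L M N μ ν :=
  ⟨M + N, fun k => min k M, fun k => k - M,
    ⟨fun _ _ _ => by dsimp only; omega, fun _ _ _ => by dsimp only; omega, by simp, by simp,
      by simp, by simp, fun _ _ => ⟨by dsimp only; omega, by dsimp only; omega⟩⟩⟩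

lemma exists_dFrechet_le_dist {L : ℕ} {μ ν : ℕ → ℕ} (hc : IsFCoupling L M N μ ν) :
    ∃ k ≤ L, dFrechet M N a b ≤ dist (a (μ k)) (b (ν k)) := by
  have hbdd : BddBelow {r : ℝ | ∃ L μ ν, IsFCoupling L M N μ ν ∧
      r = (Finset.range (L + 1)).sup' (Finset.nonempty_range_iff.mpr (Nat.succ_ne_zero _))
        (fun k => dist (a (μ k)) (b (ν k)))} := by
    refine ⟨0, ?_⟩
    rintro _ ⟨L, μ, ν, -, rfl⟩
    exact Finset.le_sup'_of_le _ (Finset.mem_range.2 L.succ_pos) dist_nonneg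
  obtain ⟨k, hk, hmax⟩ := Finset.exists_mem_eq_sup'
    (Finset.nonempty_range_iff.mpr (Nat.succ_ne_zero L)) (fun k => dist (a (μ k)) (b (ν k)))
  exact ⟨k, Nat.lt_succ_iff.1 (Finset.mem_range.1 hk), hmax ▸ csInf_le hbdd ⟨L, μ, ν, hc, rfl⟩⟩

lemma le_dFrechet
    (h : ∀ L μ ν, IsFCoupling L M N μ ν → ∃ k ≤ L, r ≤ dist (a (μ k)) (b (ν k))) :
    r ≤ dFrechet M N a b := by
  obtain ⟨L, μ, ν, hc⟩ := exists_isFCoupling M N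
  refine le_csInf ⟨_, L, μ, ν, hc, rfl⟩ ?_
  rintro _ ⟨L, μ, ν, hc, rfl⟩
  obtain ⟨k, hk, hr⟩ := h L μ ν hc
  exact hr.trans (Finset.le_sup' (fun k => dist (a (μ k)) (b (ν k)))
    (Finset.mem_range.2 (Nat.lt_succ_of_le hk)))

variable {γ₁ γ₂ : I → EuclideanSpace ℝ (Fin 2)}

lemma dPath_le {φ ψ : I → I} (hφ : IsRepar φ) (hψ : IsRepar ψ)
    (h : ∀ t, dist (γ₁ (φ t)) (γ₂ (ψ t)) ≤ r) : dPath γ₁ γ₂ ≤ r := by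
  have hsup : ⨆ t, dist (γ₁ (φ t)) (γ₂ (ψ t)) ≤ r := ciSup_le h
  have hbdd : BddBelow (range fun p : {p : (I → I) × (I → I) // IsRepar p.1 ∧ IsRepar p.2} =>
      ⨆ t, dist (γ₁ (p.1.1 t)) (γ₂ (p.1.2 t))) := by
    refine ⟨0, ?_⟩
    rintro _ ⟨_, rfl⟩
    exact Real.iSup_nonneg fun _ => dist_nonneg
  exact (ciInf_le hbdd ⟨(φ, ψ), hφ, hψ⟩).trans hsup

lemma le_dPath (hγ₁ : Bornology.IsBounded (range γ₁)) (hγ₂ : Bornology.IsBounded (range γ₂))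
    (h : ∀ φ ψ, IsRepar φ → IsRepar ψ → ∃ t, r ≤ dist (γ₁ (φ t)) (γ₂ (ψ t))) :
    r ≤ dPath γ₁ γ₂ := by
  have hid : IsRepar id := ⟨continuous_id, monotone_id, Function.surjective_id⟩
  have : Nonempty {p : (I → I) × (I → I) // IsRepar p.1 ∧ IsRepar p.2} := ⟨⟨(id, id), hid, hid⟩⟩
  refine le_ciInf fun ⟨(φ, ψ), hφ, hψ⟩ => ?_
  obtain ⟨t, ht⟩ := h φ ψ hφ hψ
  have hbdd : BddAbove (range fun t => dist (γ₁ (φ t)) (γ₂ (ψ t))) := by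
    refine ⟨Metric.diam (range γ₁ ∪ range γ₂), ?_⟩
    rintro _ ⟨t, rfl⟩
    exact Metric.dist_le_diam_of_mem (hγ₁.union hγ₂) (Or.inl ⟨_, rfl⟩) (Or.inr ⟨_, rfl⟩)
  exact ht.trans (le_ciSup hbdd t)

end FrechetDistances

lemma exists_isRepar_polyPath_eq_lineMap {L M : ℕ} (hM : 0 < M) {μ : ℕ → ℕ} (hμ : Monotone μ)
    (h0 : μ 0 = 0) (hL : μ L = M) (hstep : ∀ k < L, μ (k + 1) ≤ μ k + 1)
    (a : ℕ → EuclideanSpace ℝ (Fin 2)) :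
    ∃ φ, IsRepar φ ∧ ∀ (t : I) (k : ℕ), k < L → (k : ℝ) ≤ t * L → (t : ℝ) * L ≤ k + 1 →
      polyPath M a (φ t) = lineMap (a (μ k)) (a (μ (k + 1))) ((t : ℝ) * L - k) := by
  have hM' : (M : ℝ) ≠ 0 := Nat.cast_ne_zero.2 hM.ne'
  have hc : Monotone fun k => (μ k : ℝ) / M := fun i j hij =>
    div_le_div_of_nonneg_right (by exact_mod_cast hμ hij) M.cast_nonneg
  obtain ⟨φ, hφ, hφc⟩ := exists_isRepar_piecewiseLinear (L := L) hc (by simp [h0])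
    (by simp [hL, hM'])
  refine ⟨φ, hφ, fun t k hk hk₀ hk₁ => ?_⟩
  have hs : (t : ℝ) * L - k ∈ Icc (0 : ℝ) 1 := ⟨by linarith, by linarith⟩
  refine polyPath_eq_lineMap_of_le_succ a ?_ hs ?_
  · have := hμ (Nat.le_add_right k 1)
    have := hstep k hk
    omega
  · rw [hφc, piecewiseLinear_eq_lineMap L _ hk hk₀ hk₁, lineMap_apply_module, lineMap_apply_module]
    simp only [smul_eq_mul]
    field_simp

theorem dPath_polyPath_le_dFrechet {M N : ℕ} (hM : 0 < M) (hN : 0 < N)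
    (a b : ℕ → EuclideanSpace ℝ (Fin 2)) :
    dPath (polyPath M a) (polyPath N b) ≤ dFrechet M N a b := by
  refine le_dFrechet fun L μ ν ⟨hμ, hν, hμ0, hν0, hμL, hνL, hstep⟩ => ?_
  have hL : 0 < L := Nat.pos_of_ne_zero fun h => by subst h; omega
  obtain ⟨k₀, hk₀, hmax⟩ := (Finset.range (L + 1)).exists_max_image
    (fun k => dist (a (μ k)) (b (ν k))) (Finset.nonempty_range_iff.mpr L.succ_ne_zero)
  refine ⟨k₀, Nat.lt_succ_iff.1 (Finset.mem_range.1 hk₀), ?_⟩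
  obtain ⟨φ, hφ, hφa⟩ := exists_isRepar_polyPath_eq_lineMap hM hμ hμ0 hμL
    (fun k hk => (hstep k hk).1) a
  obtain ⟨ψ, hψ, hψb⟩ := exists_isRepar_polyPath_eq_lineMap hN hν hν0 hνL
    (fun k hk => (hstep k hk).2) b
  refine dPath_le hφ hψ fun t => ?_
  obtain ⟨k, hk, hk₀, hk₁⟩ := exists_nat_lt_mem_Icc hL
    ⟨mul_nonneg t.2.1 L.cast_nonneg, mul_le_of_le_one_left L.cast_nonneg t.2.2⟩
  rw [hφa t k hk hk₀ hk₁, hψb t k hk hk₀ hk₁]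
  refine (dist_lineMap_le_max _ _ _ _ ⟨by linarith, by linarith⟩).trans (max_le ?_ ?_)
  · exact hmax k (Finset.mem_range.2 (by omega))
  · exact hmax (k + 1) (Finset.mem_range.2 (by omega))

lemma isFCoupling_floor_add_half {L M N : ℕ} {x y : ℕ → ℝ} (hx : Monotone x) (hy : Monotone y)
    (hx0 : x 0 = 0) (hy0 : y 0 = 0) (hxL : x L = M) (hyL : y L = N)
    (hstep : ∀ k < L, x (k + 1) + y (k + 1) ≤ x k + y k + 2⁻¹) :
    IsFCoupling L M N (fun k => ⌊x k + 2⁻¹⌋₊) (fun k => ⌊y k + 2⁻¹⌋₊) := by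
  have hround (n : ℕ) : ⌊(n : ℝ) + 2⁻¹⌋₊ = n := by
    rw [add_comm, Nat.floor_add_natCast (by norm_num), Nat.floor_eq_zero.2 (by norm_num), zero_add]
  have hsucc {u u' : ℝ} (hu : 0 ≤ u) (h : u' ≤ u + 2⁻¹) : ⌊u' + 2⁻¹⌋₊ ≤ ⌊u + 2⁻¹⌋₊ + 1 := by
    rw [← Nat.floor_add_one (by positivity)]
    exact Nat.floor_le_floor (by linarith)
  refine ⟨fun i j hij => Nat.floor_le_floor (by linarith [hx hij]),
    fun i j hij => Nat.floor_le_floor (by linarith [hy hij]),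
    by simpa [hx0] using hround 0, by simpa [hy0] using hround 0,
    by simpa [hxL] using hround M, by simpa [hyL] using hround N, fun k hk => ⟨?_, ?_⟩⟩
  · exact hsucc (hx0 ▸ hx k.zero_le) (by linarith [hstep k hk, hy k.le_succ])
  · exact hsucc (hy0 ▸ hy k.zero_le) (by linarith [hstep k hk, hx k.le_succ])

lemma exists_seq_mul_add_mul_eq_min (M N : ℕ) {φ ψ : I → I} (hφ : IsRepar φ)
    (hψ : IsRepar ψ) :
    ∃ T : ℕ → I, ∀ k, (φ (T k) : ℝ) * M + ψ (T k) * N = min ((k : ℝ) / 2) (M + N) := by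
  have hcont : Continuous fun t => (φ t : ℝ) * M + ψ t * N := by
    have := hφ.1
    have := hψ.1
    fun_prop
  refine ⟨fun k => (intermediate_value_univ 0 1 hcont ?_).choose,
    fun k => (intermediate_value_univ 0 1 hcont ?_).choose_spec⟩
  all_goals
    simp only [hφ.map_zero, hψ.map_zero, hφ.map_one, hψ.map_one, Icc.coe_zero, Icc.coe_one,
      zero_mul, one_mul, add_zero]
    exact ⟨by positivity, min_le_right _ _⟩

lemma exists_isFCoupling_of_isRepar (M N : ℕ) {φ ψ : I → I} (hφ : IsRepar φ)
    (hψ : IsRepar ψ) : ∃ L μ ν, IsFCoupling L M N μ ν ∧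
      ∀ k, ∃ t, μ k = ⌊(φ t : ℝ) * M + 2⁻¹⌋₊ ∧ ν k = ⌊(ψ t : ℝ) * N + 2⁻¹⌋₊ := by
  obtain ⟨T, hT⟩ := exists_seq_mul_add_mul_eq_min M N hφ hψ
  set f : I → ℝ := fun t => φ t * M
  set g : I → ℝ := fun t => ψ t * N
  have hf : Monotone f := fun s t hst => mul_le_mul_of_nonneg_right (hφ.2.1 hst) M.cast_nonneg
  have hg : Monotone g := fun s t hst => mul_le_mul_of_nonneg_right (hψ.2.1 hst) N.cast_nonneg
  have hmono {j k : ℕ} (hjk : j ≤ k) : f (T j) ≤ f (T k) ∧ g (T j) ≤ g (T k) :=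
    hf.le_and_le_of_add_le_add hg (by rw [hT, hT]; gcongr)
  have hf_mem (k : ℕ) : f (T k) ∈ Icc (0 : ℝ) M :=
    ⟨mul_nonneg (φ _).2.1 M.cast_nonneg, mul_le_of_le_one_left M.cast_nonneg (φ _).2.2⟩
  have hg_mem (k : ℕ) : g (T k) ∈ Icc (0 : ℝ) N :=
    ⟨mul_nonneg (ψ _).2.1 N.cast_nonneg, mul_le_of_le_one_left N.cast_nonneg (ψ _).2.2⟩
  have hstart : f (T 0) + g (T 0) = 0 := by
    rw [hT, Nat.cast_zero, zero_div, min_eq_left (by positivity)]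
  have hend : f (T (2 * (M + N))) + g (T (2 * (M + N))) = M + N := by
    rw [hT]
    push_cast
    rw [mul_div_cancel_left₀ _ two_ne_zero, min_self]
  have hstep (k : ℕ) : f (T (k + 1)) + g (T (k + 1)) ≤ f (T k) + g (T k) + 2⁻¹ := by
    rw [hT, hT, ← min_add_add_right]
    push_cast
    exact min_le_min (by linarith) (by linarith)
  refine ⟨2 * (M + N), _, _, isFCoupling_floor_add_half (x := f ∘ T) (y := g ∘ T)
    (fun _ _ h => (hmono h).1) (fun _ _ h => (hmono h).2) ?_ ?_ ?_ ?_ (fun k _ => hstep k),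
    fun k => ⟨T k, rfl, rfl⟩⟩
  all_goals
    simp only [Function.comp_apply]
    linarith [(hf_mem 0).1, (hg_mem 0).1, (hf_mem (2 * (M + N))).2, (hg_mem (2 * (M + N))).2]

theorem dFrechet_le_dPath_polyPath_add {M N : ℕ} (hM : 0 < M) (hN : 0 < N)
    (a b : ℕ → EuclideanSpace ℝ (Fin 2)) {SA SB : ℝ} (hSA : ∀ i < M, dist (a (i + 1)) (a i) ≤ SA)
    (hSB : ∀ i < N, dist (b (i + 1)) (b i) ≤ SB) :
    dFrechet M N a b ≤ dPath (polyPath M a) (polyPath N b) + (SA + SB) / 2 := by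
  rw [← sub_le_iff_le_add]
  refine le_dPath (isBounded_range_polyPath a) (isBounded_range_polyPath b)
    fun φ ψ hφ hψ => ?_
  obtain ⟨L, μ, ν, hc, htimes⟩ := exists_isFCoupling_of_isRepar M N hφ hψ
  obtain ⟨k, -, hk⟩ := exists_dFrechet_le_dist (a := a) (b := b) hc
  obtain ⟨t, hμ, hν⟩ := htimes k
  refine ⟨t, ?_⟩
  have hA := dist_polyPath_floor_add_half_le a hM hSA (φ t)
  have hB := dist_polyPath_floor_add_half_le b hN hSB (ψ t)
  rw [← hμ] at hA
  rw [← hν, dist_comm] at hB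
  linarith [dist_triangle4 (a (μ k)) (polyPath M a (φ t)) (polyPath N b (ψ t)) (b (ν k))]

/-- the discrete Fréchet distance between two finite sequences and
the continuous Fréchet distance between the corresponding polygonal paths differ
by at most the maximal step length of either sequence. -/
theorem dFrechet_vs_polygonal (M N : ℕ) (hM : 0 < M) (hN : 0 < N)
    (a b : ℕ → EuclideanSpace ℝ (Fin 2)) :
    |dFrechet M N a b - dPath (polyPath M a) (polyPath N b)| ≤
      max ((Finset.range M).sup'
            (Finset.nonempty_range_iff.mpr (Nat.pos_iff_ne_zero.mp hM))
            (fun i => dist (a (i + 1)) (a i)))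
          ((Finset.range N).sup'
            (Finset.nonempty_range_iff.mpr (Nat.pos_iff_ne_zero.mp hN))
            (fun i => dist (b (i + 1)) (b i))) := by
  set SA := (Finset.range M).sup' _ fun i => dist (a (i + 1)) (a i)
  set SB := (Finset.range N).sup' _ fun i => dist (b (i + 1)) (b i)
  have hSA (i : ℕ) (hi : i < M) : dist (a (i + 1)) (a i) ≤ SA :=
    Finset.le_sup' (fun i => dist (a (i + 1)) (a i)) (Finset.mem_range.2 hi)
  have hSB (i : ℕ) (hi : i < N) : dist (b (i + 1)) (b i) ≤ SB :=
    Finset.le_sup' (fun i => dist (b (i + 1)) (b i)) (Finset.mem_range.2 hi)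
  have hlower := dPath_polyPath_le_dFrechet hM hN a b
  have hupper := dFrechet_le_dPath_polyPath_add hM hN a b hSA hSB
  rw [abs_le]
  constructor <;> linarith [dist_nonneg.trans (hSA 0 hM), le_max_left SA SB, le_max_right SA SB]
end
end
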